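/- arXiv:2408.15202 — 5 statements merged into one kernel-verified Lean document; each statement's English description precedes it below -/
import Mathlib

section
/- Fix i ∈ [2n] and v ∈ F₂^{2n} with v_i = 0. Define s(v,i) = I + v e_i^T + J e_i v^T J + v_{2n+1-i} e_{2n+1-i} e_i^T over F₂, where J is the 2n×2n reverse diagonal matrix. Then s(v,i) is symplectic: s(v,i)^T J s(v,i) = J. Moreover s(v,i)^2 = I and s(v,i) e_i = e_i + v. -/
open Matrix

/-- The `2n × 2n` reverse diagonal matrix over `F₂`. -/
def Jmat (n : ℕ) : Matrix (Fin (2 * n)) (Fin (2 * n)) (ZMod 2) :=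
  Matrix.of fun i j => if j = i.rev then 1 else 0

/-- The symplectic group `Sp(2n)` over `F₂` with respect to the form `xᵀ J y`. -/
def Sp (n : ℕ) : Set (Matrix (Fin (2 * n)) (Fin (2 * n)) (ZMod 2)) :=
  {C | Cᵀ * Jmat n * C = Jmat n}

/-- The symplectic Gaussian move
`s(v,i) = I + v e_iᵀ + J e_i vᵀ J + v_{2n+1-i} e_{2n+1-i} e_iᵀ`. -/
def smat {n : ℕ} (v : Fin (2 * n) → ZMod 2) (i : Fin (2 * n)) :
    Matrix (Fin (2 * n)) (Fin (2 * n)) (ZMod 2) :=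
  1 + Matrix.vecMulVec v (Pi.single i 1)
    + Matrix.vecMulVec (Pi.single i.rev 1) (fun j => v j.rev)
    + v i.rev • Matrix.single i.rev i 1

/-! Write `s(v,i) = 1 + M` with `M = v e_iᵀ + (J e_i) uᵀ` and `u = J v + v_{2n+1-i} e_i`.
Over `F₂`, `(1 + M)² = 1 + M²` and `(1 + M)ᵀ J (1 + M) = J + ((J M)ᵀ + J M) + Mᵀ J M`, so it
suffices that `M² = 0`, that `J M` is symmetric and that `Mᵀ J M = 0`. Expanding the rank-one
products, every cross term carries one of the scalars `e_iᵀ v = v_i`, `e_iᵀ J e_i`, `vᵀ J v`,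
`uᵀ J e_i`, and these vanish: `v_i = 0`, the reversal `j ↦ 2n+1-j` has no fixed point, and
hence `J` is alternating. -/

lemma Fin.rev_ne_self {n : ℕ} (a : Fin (2 * n)) : a.rev ≠ a := by
  intro h
  have := congrArg Fin.val h
  rw [Fin.val_rev] at this
  omega

lemma Pi.single_comp_rev {R : Type*} [Zero R] {m : ℕ} (i : Fin m) (x : R) :
    Pi.single i x ∘ Fin.rev = Pi.single i.rev x :=
  Pi.single_comp_equiv Fin.revPerm i x

section CharTwo

variable {R : Type*}

lemma dotProduct_comp_rev_self [CommRing R] [CharP R 2] {n : ℕ} (v : Fin (2 * n) → R) :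
    (v ∘ Fin.rev) ⬝ᵥ v = 0 :=
  Finset.sum_ninvolution Fin.rev
    (fun a => by simp [mul_comm (v a), CharTwo.add_self_eq_zero])
    (fun a _ => Fin.rev_ne_self a) (fun _ => Finset.mem_univ _) Fin.rev_rev

lemma Matrix.add_self_eq_zero_of_charTwo [Semiring R] [CharP R 2] {m n : Type*}
    (A : Matrix m n R) : A + A = 0 := by
  ext a b
  exact CharTwo.add_self_eq_zero (A a b)

variable {ι : Type*} [Fintype ι] [DecidableEq ι]

lemma Matrix.mul_self_eq_one_of_sub_one_mul_self_eq_zero [Ring R] [CharP R 2] {A : Matrix ι ι R}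
    (h : (A - 1) * (A - 1) = 0) : A * A = 1 := by
  obtain ⟨M, rfl⟩ : ∃ M, A = 1 + M := ⟨A - 1, by abel⟩
  rw [add_sub_cancel_left] at h
  calc (1 + M) * (1 + M) = 1 + (M + M) + M * M := by noncomm_ring
    _ = 1 := by rw [h, M.add_self_eq_zero_of_charTwo, add_zero, add_zero]

lemma Matrix.transpose_mul_mul_self_eq_of_sub_one [CommRing R] [CharP R 2] {A J : Matrix ι ι R}
    (hJ : Jᵀ = J) (hsymm : (J * (A - 1))ᵀ = J * (A - 1)) (h : (A - 1)ᵀ * J * (A - 1) = 0) :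
    Aᵀ * J * A = J := by
  obtain ⟨M, rfl⟩ : ∃ M, A = 1 + M := ⟨A - 1, by abel⟩
  rw [add_sub_cancel_left] at hsymm h
  rw [transpose_mul, hJ] at hsymm
  calc (1 + M)ᵀ * J * (1 + M) = J + (Mᵀ * J + J * M) + Mᵀ * J * M := by
        rw [transpose_add, transpose_one]; noncomm_ring
    _ = J := by rw [h, hsymm, (J * M).add_self_eq_zero_of_charTwo, add_zero, add_zero]

end CharTwo

variable {n : ℕ}

lemma Jmat_transpose : (Jmat n)ᵀ = Jmat n := by
  ext a b
  simp only [Jmat, transpose_apply, of_apply, ← Fin.rev_eq_iff (i := b), eq_comm]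

lemma Jmat_mulVec (u : Fin (2 * n) → ZMod 2) : Jmat n *ᵥ u = u ∘ Fin.rev := by
  ext a
  simp [Jmat, mulVec, dotProduct]

lemma smat_sub_one (v : Fin (2 * n) → ZMod 2) (i : Fin (2 * n)) :
    smat v i - 1 = vecMulVec v (Pi.single i 1)
      + vecMulVec (Pi.single i.rev 1) (v ∘ Fin.rev + v i.rev • Pi.single i 1) := by
  rw [smat, single_eq_single_vecMulVec_single, vecMulVec_add, vecMulVec_smul, Function.comp_def]
  abel

section smat

variable {v : Fin (2 * n) → ZMod 2} {i : Fin (2 * n)}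

lemma smat_sub_one_mul_self (hv : v i = 0) : (smat v i - 1) * (smat v i - 1) = 0 := by
  simp [smat_sub_one, add_mul, mul_add, vecMulVec_mul_vecMulVec, hv, Fin.rev_ne_self,
    dotProduct_comp_rev_self]

lemma Jmat_mul_smat_sub_one :
    Jmat n * (smat v i - 1) = vecMulVec (v ∘ Fin.rev) (Pi.single i 1)
      + vecMulVec (Pi.single i 1) (v ∘ Fin.rev + v i.rev • Pi.single i 1) := by
  rw [smat_sub_one, mul_add, mul_vecMulVec, mul_vecMulVec, Jmat_mulVec, Jmat_mulVec,
    Pi.single_comp_rev, Fin.rev_rev]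

lemma Jmat_mul_smat_sub_one_transpose :
    (Jmat n * (smat v i - 1))ᵀ = Jmat n * (smat v i - 1) := by
  rw [Jmat_mul_smat_sub_one]
  simp only [vecMulVec_add, vecMulVec_smul, transpose_add, transpose_smul, transpose_vecMulVec]
  abel

lemma smat_sub_one_transpose_mul_Jmat_mul (hv : v i = 0) :
    (smat v i - 1)ᵀ * Jmat n * (smat v i - 1) = 0 := by
  rw [Matrix.mul_assoc, Jmat_mul_smat_sub_one, smat_sub_one]
  simp [add_mul, mul_add, vecMulVec_mul_vecMulVec, hv, Fin.rev_ne_self,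
    dotProduct_comm v (v ∘ Fin.rev), dotProduct_comp_rev_self]

lemma smat_sub_one_mulVec_single : (smat v i - 1) *ᵥ Pi.single i 1 = v := by
  rw [smat_sub_one, add_mulVec, vecMulVec_mulVec, vecMulVec_mulVec]
  simp [CharTwo.add_self_eq_zero]

end smat

theorem stmt_9 {n : ℕ} (i : Fin (2 * n)) (v : Fin (2 * n) → ZMod 2)
    (hv : v i = 0) :
    (smat v i)ᵀ * Jmat n * smat v i = Jmat n ∧
    smat v i * smat v i = 1 ∧
    (smat v i).mulVec (Pi.single i 1) = Pi.single i 1 + v := by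
  refine ⟨?_, ?_, ?_⟩
  · exact transpose_mul_mul_self_eq_of_sub_one Jmat_transpose Jmat_mul_smat_sub_one_transpose
      (smat_sub_one_transpose_mul_Jmat_mul hv)
  · exact mul_self_eq_one_of_sub_one_mul_self_eq_zero (smat_sub_one_mul_self hv)
  · rw [show smat v i = 1 + (smat v i - 1) by abel, add_mulVec, one_mulVec,
      smat_sub_one_mulVec_single]
end

section
/- Let Π and Π' be m×n incomplete permutation matrices over F₂ (at most one 1 per row and per column). If there exist lower unitriangular matrices L (m×m) and R (n×n) with L Π = Π' R, then Π = Π'. -/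
/-!
Lower unitriangular factors act on "upper-right corners" (rows in a lower set, columns in an
upper set) separately: the corner of `L * Π` is the corner of `Π` multiplied by an invertible
corner of `L`, and likewise for `Π' * R`. Hence all corners of `Π` and `Π'` have the same rank.
For an incomplete permutation matrix that rank is the number of nonzero entries in the corner,
and inclusion–exclusion over the four corners cut out at `(i, j)` recovers whether the `(i, j)`
entry is nonzero, which over `𝔽₂` determines the entry.
-/

open Finset

lemma Finset.card_filter_insert_product_add {α β : Type*} [DecidableEq α] [DecidableEq β]
    (f : α × β → Prop) [DecidablePred f] {a : α} {b : β} {s : Finset α} {t : Finset β}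
    (ha : a ∉ s) (hb : b ∉ t) :
    #{x ∈ insert a s ×ˢ insert b t | f x} + #{x ∈ s ×ˢ t | f x} =
      #{x ∈ insert a s ×ˢ t | f x} + #{x ∈ s ×ˢ insert b t | f x} + if f (a, b) then 1 else 0 := by
  simp only [card_filter, sum_product, sum_insert ha, sum_insert hb, sum_add_distrib]
  ring

namespace Matrix

variable {K ι κ : Type*}

def IsIncompletePerm [Zero K] (M : Matrix ι κ K) : Prop :=
  (∀ i j j', M i j ≠ 0 → M i j' ≠ 0 → j = j') ∧ (∀ i i' j, M i j ≠ 0 → M i' j ≠ 0 → i = i')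

namespace IsIncompletePerm

lemma toBlock [Zero K] {M : Matrix ι κ K} (hM : M.IsIncompletePerm) (p : ι → Prop) (q : κ → Prop) :
    (M.toBlock p q).IsIncompletePerm :=
  ⟨fun i j j' h h' => Subtype.ext (hM.1 i j j' h h'),
    fun i i' j h h' => Subtype.ext (hM.2 i i' j h h')⟩

variable [Field K] [DecidableEq K] {M : Matrix ι κ K}

lemma rank_eq_card_support [Fintype ι] [Fintype κ] (hM : M.IsIncompletePerm) :
    M.rank = #{x : ι × κ | M x.1 x.2 ≠ 0} := by
  set S := ({x : ι × κ | M x.1 x.2 ≠ 0} : Finset (ι × κ))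
  let v : S → ι → K := fun x => M.col (x : ι × κ).2
  -- each column through a nonzero entry is the only one not vanishing on the row of that entry
  have hv : LinearIndependent K v := by
    refine Fintype.linearIndependent_iff.mpr fun g hg x => ?_
    have hx : M (x : ι × κ).1 (x : ι × κ).2 ≠ 0 := (mem_filter.mp x.2).2
    have hentry := congrFun hg (x : ι × κ).1
    rw [Finset.sum_apply, Finset.sum_eq_single x] at hentry
    · exact (mul_eq_zero.mp hentry).resolve_right hx
    · intro y _ hyx
      have hy : M (y : ι × κ).1 (y : ι × κ).2 ≠ 0 := (mem_filter.mp y.2).2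
      have hzero : M (x : ι × κ).1 (y : ι × κ).2 = 0 := by
        by_contra hne
        have hcol : (y : ι × κ).2 = (x : ι × κ).2 := hM.1 _ _ _ hne hx
        have hrow : (y : ι × κ).1 = (x : ι × κ).1 := hM.2 _ _ _ hy (hcol ▸ hx)
        exact hyx (Subtype.ext (Prod.ext hrow hcol))
      simp [v, hzero]
    · simp
  have hspan : Submodule.span K (Set.range M.col) = Submodule.span K (Set.range v) := by
    refine le_antisymm (Submodule.span_le.mpr ?_) (Submodule.span_mono ?_)
    · rintro _ ⟨j, rfl⟩
      by_cases hj : M.col j = 0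
      · rw [hj]; exact Submodule.zero_mem _
      · obtain ⟨i, hi⟩ := Function.ne_iff.mp hj
        exact Submodule.subset_span ⟨⟨(i, j), mem_filter.mpr ⟨mem_univ _, hi⟩⟩, rfl⟩
    · rintro _ ⟨x, rfl⟩
      exact ⟨_, rfl⟩
  rw [rank_eq_finrank_span_cols, hspan, finrank_span_eq_card hv, Fintype.card_coe]

lemma rank_toBlock (hM : M.IsIncompletePerm)
    (s : Finset ι) (t : Finset κ) :
    (M.toBlock (· ∈ s) (· ∈ t)).rank = #{x ∈ s ×ˢ t | M x.1 x.2 ≠ 0} := by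
  rw [(hM.toBlock _ _).rank_eq_card_support]
  refine card_bij (fun x _ => ((x.1 : ι), (x.2 : κ))) ?_ ?_ ?_
  · intro x hx
    simpa [x.1.2, x.2.2] using (mem_filter.mp hx).2
  · intro x _ y _ hxy
    simp only [Prod.mk.injEq] at hxy
    exact Prod.ext (Subtype.ext hxy.1) (Subtype.ext hxy.2)
  · intro y hy
    simp only [mem_filter, mem_product] at hy
    exact ⟨(⟨y.1, hy.1.1⟩, ⟨y.2, hy.1.2⟩), mem_filter.mpr ⟨mem_univ _, hy.2⟩, rfl⟩

end IsIncompletePerm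

section Triangular

variable [CommRing K] [LinearOrder ι] {L : Matrix ι ι K}

lemma IsLowerTriangular.toBlock (hL : L.IsLowerTriangular) (p : ι → Prop) :
    (L.toBlock p p).IsLowerTriangular :=
  fun _ _ h => hL h

lemma IsLowerTriangular.toBlock_mul_of_isLowerSet [Fintype ι] (hL : L.IsLowerTriangular)
    {s : Finset ι} (hs : IsLowerSet (s : Set ι)) (q : κ → Prop) (P : Matrix ι κ K) :
    (L * P).toBlock (· ∈ s) q = L.toBlock (· ∈ s) (· ∈ s) * P.toBlock (· ∈ s) q := by
  have hzero : L.toBlock (· ∈ s) (· ∉ s) = 0 := by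
    ext a b
    exact hL (lt_of_not_ge fun hba => b.2 (hs hba a.2))
  rw [toBlock_mul_eq_add _ (· ∈ s), hzero, Matrix.zero_mul, add_zero]
  -- the two sides differ only in the `Fintype` instance on `↥s` used by the product
  convert rfl

lemma IsLowerTriangular.mul_toBlock_of_isUpperSet [Fintype ι] (hL : L.IsLowerTriangular)
    {t : Finset ι} (ht : IsUpperSet (t : Set ι)) (p : κ → Prop) (P : Matrix κ ι K) :
    (P * L).toBlock p (· ∈ t) = P.toBlock p (· ∈ t) * L.toBlock (· ∈ t) (· ∈ t) := by
  have hzero : L.toBlock (· ∉ t) (· ∈ t) = 0 := by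
    ext a b
    exact hL (lt_of_not_ge fun hba => a.2 (ht hba b.2))
  rw [toBlock_mul_eq_add _ (· ∈ t), hzero, Matrix.mul_zero, add_zero]
  convert rfl

lemma rank_mul_eq_left_of_isLowerTriangular [IsDomain K] [Fintype ι]
    (A : Matrix ι ι K) (B : Matrix κ ι K) (hA : A.IsLowerTriangular) (hd : ∀ i, A i i ≠ 0) :
    (B * A).rank = B.rank := by
  classical
  refine rank_mul_eq_left_of_det_mem_nonZeroDivisors A B (mem_nonZeroDivisors_of_ne_zero ?_)
  rw [det_of_isLowerTriangular A hA]
  exact prod_ne_zero_iff.mpr fun i _ => hd i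

end Triangular

lemma rank_toBlock_eq_of_mul_eq [Field K] [LinearOrder ι] [Fintype ι] [LinearOrder κ] [Fintype κ]
    {L : Matrix ι ι K} {R : Matrix κ κ K} {P P' : Matrix ι κ K}
    (hL : L.IsLowerTriangular) (hLd : ∀ i, L i i ≠ 0)
    (hR : R.IsLowerTriangular) (hRd : ∀ j, R j j ≠ 0) (h : L * P = P' * R)
    {s : Finset ι} {t : Finset κ} (hs : IsLowerSet (s : Set ι)) (ht : IsUpperSet (t : Set κ)) :
    (P.toBlock (· ∈ s) (· ∈ t)).rank = (P'.toBlock (· ∈ s) (· ∈ t)).rank :=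
  calc (P.toBlock (· ∈ s) (· ∈ t)).rank
      = (L.toBlock (· ∈ s) (· ∈ s) * P.toBlock (· ∈ s) (· ∈ t)).rank :=
        (rank_mul_eq_right_of_isLowerTriangular (L.toBlock _ _) _ (hL.toBlock _) fun i => hLd i.1).symm
    _ = (P'.toBlock (· ∈ s) (· ∈ t) * R.toBlock (· ∈ t) (· ∈ t)).rank := by
        rw [← hL.toBlock_mul_of_isLowerSet hs, h, hR.mul_toBlock_of_isUpperSet ht]
    _ = (P'.toBlock (· ∈ s) (· ∈ t)).rank :=
        rank_mul_eq_left_of_isLowerTriangular _ _ (hR.toBlock _) fun j => hRd j.1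

lemma ne_zero_iff_of_card_corner_eq [Zero K] [DecidableEq K]
    [LinearOrder ι] [LocallyFiniteOrderBot ι] [LinearOrder κ] [LocallyFiniteOrderTop κ]
    {M N : Matrix ι κ K}
    (h : ∀ (s : Finset ι) (t : Finset κ), IsLowerSet (s : Set ι) → IsUpperSet (t : Set κ) →
      #{x ∈ s ×ˢ t | M x.1 x.2 ≠ 0} = #{x ∈ s ×ˢ t | N x.1 x.2 ≠ 0}) (i : ι) (j : κ) :
    M i j ≠ 0 ↔ N i j ≠ 0 := by
  have corner (A : Matrix ι κ K) := card_filter_insert_product_add (fun x => A x.1 x.2 ≠ 0)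
    (notMem_Iio_self (b := i)) (notMem_Ioi_self (b := j))
  simp only [Iio_insert, Ioi_insert] at corner
  have hIic : IsLowerSet (Iic i : Set ι) := by simpa using isLowerSet_Iic i
  have hIio : IsLowerSet (Iio i : Set ι) := by simpa using isLowerSet_Iio i
  have hIci : IsUpperSet (Ici j : Set κ) := by simpa using isUpperSet_Ici j
  have hIoi : IsUpperSet (Ioi j : Set κ) := by simpa using isUpperSet_Ioi j
  have hM := corner M
  rw [h _ _ hIic hIci, h _ _ hIio hIoi, h _ _ hIic hIoi, h _ _ hIio hIci, corner N] at hM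
  by_cases hMij : M i j = 0 <;> by_cases hNij : N i j = 0 <;> simp [hMij, hNij] at hM ⊢

end Matrix

lemma ZMod.two_eq_of_ne_zero_iff : ∀ {x y : ZMod 2}, (x ≠ 0 ↔ y ≠ 0) → x = y := by
  decide

theorem stmt_13 {m n : ℕ} (P P' : Matrix (Fin m) (Fin n) (ZMod 2))
    (hProw : ∀ i j j', P i j ≠ 0 → P i j' ≠ 0 → j = j')
    (hPcol : ∀ i i' j, P i j ≠ 0 → P i' j ≠ 0 → i = i')
    (hP'row : ∀ i j j', P' i j ≠ 0 → P' i j' ≠ 0 → j = j')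
    (hP'col : ∀ i i' j, P' i j ≠ 0 → P' i' j ≠ 0 → i = i')
    (L : Matrix (Fin m) (Fin m) (ZMod 2)) (R : Matrix (Fin n) (Fin n) (ZMod 2))
    (hLdiag : ∀ i, L i i = 1) (hLlow : ∀ i j, i < j → L i j = 0)
    (hRdiag : ∀ i, R i i = 1) (hRlow : ∀ i j, i < j → R i j = 0)
    (h : L * P = P' * R) :
    P = P' := by
  have hP : P.IsIncompletePerm := ⟨hProw, hPcol⟩
  have hP' : P'.IsIncompletePerm := ⟨hP'row, hP'col⟩
  have hL : L.IsLowerTriangular := fun i j => hLlow i j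
  have hR : R.IsLowerTriangular := fun i j => hRlow i j
  have hcorner (s : Finset (Fin m)) (t : Finset (Fin n)) (hs : IsLowerSet (s : Set (Fin m)))
      (ht : IsUpperSet (t : Set (Fin n))) :
      #{x ∈ s ×ˢ t | P x.1 x.2 ≠ 0} = #{x ∈ s ×ˢ t | P' x.1 x.2 ≠ 0} := by
    rw [← hP.rank_toBlock, ← hP'.rank_toBlock]
    exact Matrix.rank_toBlock_eq_of_mul_eq hL (by simp [hLdiag]) hR (by simp [hRdiag]) h hs ht
  ext i j
  exact ZMod.two_eq_of_ne_zero_iff (Matrix.ne_zero_iff_of_card_corner_eq hcorner i j)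
end

section
/- Let β : [r] → [n] be injective and let T_R(β) = {(i,j) : i ∈ Im(β), j < i, j ∉ {β(1),...,β(β^{-1}(i)−1)}}. Let R ∈ L(n, T_R(β)). If there exist m, a lower unitriangular L ∈ F₂^{m×m}, and a strictly increasing α : [r] → [m] such that L Π(α,β) = Π(α,β) R, where Π(α,β) = Σ_{i=1}^r e_{α(i)} e_{β(i)}^T, then R = I. -/
/-- The span of the standard basis matrices `e_i e_jᵀ` for `(i,j) ∈ T`, over `F₂`. -/
def spanT {n : ℕ} (T : Set (Fin n × Fin n)) :
    Submodule (ZMod 2) (Matrix (Fin n) (Fin n) (ZMod 2)) :=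
  Submodule.span (ZMod 2) {E | ∃ p ∈ T, E = Matrix.single p.1 p.2 1}

/-- `L(n,T) = I + span{e_i e_jᵀ : (i,j) ∈ T}`. -/
def LnT {n : ℕ} (T : Set (Fin n × Fin n)) : Set (Matrix (Fin n) (Fin n) (ZMod 2)) :=
  {M | ∃ A ∈ spanT T, M = 1 + A}

/-- `T_R(β) = {(i,j) : i ∈ Im(β), j < i, j ∉ {β(1),…,β(β⁻¹(i)−1)}}`. -/
def TR {r n : ℕ} (β : Fin r → Fin n) : Set (Fin n × Fin n) :=
  {p | ∃ k, β k = p.1 ∧ p.2 < p.1 ∧ ∀ l, l < k → β l ≠ p.2}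

/-!
Write `Π = Π(α,β)` and `R = 1 + A` with `A` supported on `T_R(β)`. Row `α k` of `Π R` is row
`β k` of `R`, while row `α k` of `L Π` has entry `L (α k) (α l)` in each column `β l` and vanishes
in the columns outside `Im β`. Take `(β k, j) ∈ T_R(β)`: then `j ≠ β l` for every `l ≤ k`, so
every contributing `l` has `α k < α l` and `L (α k) (α l) = 0`. Hence `A (β k) j = R (β k) j = 0`,
and `A` vanishes outside `T_R(β)` anyway.
-/

lemma spanT_apply_eq_zero {n : ℕ} {T : Set (Fin n × Fin n)}
    {A : Matrix (Fin n) (Fin n) (ZMod 2)} (hA : A ∈ spanT T)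
    {i j : Fin n} (hij : (i, j) ∉ T) : A i j = 0 := by
  induction hA using Submodule.span_induction with
  | mem E hE =>
    obtain ⟨p, hp, rfl⟩ := hE
    apply Matrix.single_apply_of_ne
    rintro ⟨rfl, rfl⟩
    exact hij hp
  | zero => rfl
  | add x y _ _ hx hy => simp [hx, hy]
  | smul c x _ hx => simp [hx]

namespace Matrix

variable {ι m n S : Type*} [Fintype ι] [DecidableEq m] [DecidableEq n] [Semiring S]

/-- The matrix `Π(α,β)` of the paper. -/
def partialPerm (α : ι → m) (β : ι → n) : Matrix m n S :=
  ∑ k, single (α k) (β k) 1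

lemma mul_partialPerm_apply {l : Type*} [Fintype m] (α : ι → m) (β : ι → n)
    (M : Matrix l m S) (i : l) (j : n) :
    (M * (partialPerm α β : Matrix m n S)) i j = ∑ k, if β k = j then M i (α k) else 0 := by
  rw [partialPerm, Matrix.mul_sum, sum_apply]
  refine Finset.sum_congr rfl fun k _ => ?_
  split_ifs with hk
  · rw [← hk, mul_single_apply_same, mul_one]
  · exact mul_single_apply_of_ne _ _ _ _ _ (Ne.symm hk) _

lemma partialPerm_mul_apply_of_injective {l : Type*} [Fintype n] {α : ι → m}
    (hα : Function.Injective α) (β : ι → n) (M : Matrix n l S) (k : ι) (j : l) :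
    ((partialPerm α β : Matrix m n S) * M) (α k) j = M (β k) j := by
  rw [partialPerm, Matrix.sum_mul, sum_apply, Finset.sum_eq_single k
    (fun k' _ hk' => single_mul_apply_of_ne _ _ _ _ _ (hα.ne hk').symm _) (by simp),
    single_mul_apply_same, one_mul]

lemma mul_partialPerm_apply_eq_zero [LinearOrder ι] [Preorder m] [Fintype m]
    {L : Matrix m m S} (hL : ∀ i j, i < j → L i j = 0) {α : ι → m} (hα : StrictMono α)
    (β : ι → n) {k : ι} {j : n} (hj : ∀ l, l ≤ k → β l ≠ j) :
    (L * (partialPerm α β : Matrix m n S)) (α k) j = 0 := by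
  rw [mul_partialPerm_apply]
  refine Finset.sum_eq_zero fun l _ => ?_
  split_ifs with hl
  · exact hL _ _ (hα (not_le.mp fun hlk => hj l hlk hl))
  · rfl

end Matrix

open Matrix in
theorem stmt_14_general {r n : ℕ} (β : Fin r → Fin n)
    (R : Matrix (Fin n) (Fin n) (ZMod 2)) (hR : R ∈ LnT (TR β))
    (m : ℕ) (L : Matrix (Fin m) (Fin m) (ZMod 2))
    (hLlow : ∀ i j, i < j → L i j = 0)
    (α : Fin r → Fin m) (hα : StrictMono α)
    (h : L * (∑ k, Matrix.single (α k) (β k) (1 : ZMod 2))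
        = (∑ k, Matrix.single (α k) (β k) (1 : ZMod 2)) * R) :
    R = 1 := by
  obtain ⟨A, hA, rfl⟩ := hR
  replace h : L * (partialPerm α β : Matrix (Fin m) (Fin n) (ZMod 2))
      = (partialPerm α β : Matrix (Fin m) (Fin n) (ZMod 2)) * (1 + A) := h
  suffices A = 0 by rw [this, add_zero]
  ext i j
  by_cases hij : (i, j) ∈ TR β
  · obtain ⟨k, rfl, hjk, hprev⟩ := hij
    have hcol : ∀ l, l ≤ k → β l ≠ j := fun l hl =>
      hl.lt_or_eq.elim (hprev l) fun hlk => hlk ▸ hjk.ne'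
    have hrow := congrFun (congrFun h (α k)) j
    rw [mul_partialPerm_apply_eq_zero hLlow hα β hcol,
      partialPerm_mul_apply_of_injective hα.injective, Matrix.add_apply, one_apply_ne hjk.ne',
      zero_add] at hrow
    exact hrow.symm
  · exact spanT_apply_eq_zero hA hij

theorem stmt_14 {r n : ℕ} (β : Fin r → Fin n) (hβ : Function.Injective β)
    (R : Matrix (Fin n) (Fin n) (ZMod 2)) (hR : R ∈ LnT (TR β))
    (m : ℕ) (L : Matrix (Fin m) (Fin m) (ZMod 2))
    (hLdiag : ∀ i, L i i = 1) (hLlow : ∀ i j, i < j → L i j = 0)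
    (α : Fin r → Fin m) (hα : StrictMono α)
    (h : L * (∑ k, Matrix.single (α k) (β k) (1 : ZMod 2))
        = (∑ k, Matrix.single (α k) (β k) (1 : ZMod 2)) * R) :
    R = 1 :=
  stmt_14_general β R hR m L hLlow α hα h
end

section
/- Let q(i) = min(i, 2n+1−i) for i ∈ [2n], and let β : [r] → [2n] be qubit-injective, i.e., q∘β is injective. Define T_M(β) = {(i,j) : i ∈ Im(β), j < i, q(j) ∉ {q(β(1)),...,q(β(β^{-1}(i)−1))}} and let T(β) be the union of T_M(β) with its reversal {(i,j) : (2n+1−j, 2n+1−i) ∈ T_M(β)}. Then T(β) is a transitive subset of {(i,j) ∈ [2n]² : i > j} and is closed under reversal. -/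
/-- `q(i) = min(i, 2n+1−i)`: the qubit on which index `i` acts (0-based via `Fin.rev`). -/
def qb {n : ℕ} (i : Fin (2 * n)) : ℕ := min (i : ℕ) (i.rev : ℕ)

/-- `T_M(β) = {(i,j) : i ∈ Im(β), j < i, q(j) ∉ {q(β(1)),…,q(β(β⁻¹(i)−1))}}`. -/
def TM {r n : ℕ} (β : Fin r → Fin (2 * n)) : Set (Fin (2 * n) × Fin (2 * n)) :=
  {p | ∃ k, β k = p.1 ∧ p.2 < p.1 ∧ ∀ l, l < k → qb (β l) ≠ qb p.2}

/-- `T(β)`: the union of `T_M(β)` with its reversal. -/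
def Tfull {r n : ℕ} (β : Fin r → Fin (2 * n)) : Set (Fin (2 * n) × Fin (2 * n)) :=
  TM β ∪ {p | (p.2.rev, p.1.rev) ∈ TM β}

/-
Membership `(i, j) ∈ T_M(β)` is witnessed by a position `k` with `β k = i`; transitivity of `T_M(β)`
holds because the witness for the middle index `j` cannot come before the one for `i` (else `q(j)`
would be among the excluded qubits). For a mixed pair, one edge from `T_M(β)` and one from its
reversal, the two witnesses `k₁`, `k₂` are compared: the earlier one gives the composite edge,
since a qubit `q(β l)` with `l` before it differs from the qubit of the other witness by
qubit-injectivity. The remaining mixed order cannot occur, as it would put both `j` and `2n+1−j`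
in the image of `β`.
-/

@[simp]
lemma qb_rev {n : ℕ} (i : Fin (2 * n)) : qb i.rev = qb i := by
  simp [qb, Nat.min_comm]

lemma Fin.rev_ne_self_two_mul {n : ℕ} (i : Fin (2 * n)) : i.rev ≠ i := by
  intro h
  have := congrArg Fin.val h
  rw [Fin.val_rev] at this
  omega

section TM

variable {r n : ℕ} {β : Fin r → Fin (2 * n)}

lemma lt_of_mem_TM {i j : Fin (2 * n)} (h : (i, j) ∈ TM β) : j < i :=
  let ⟨_, _, hji, _⟩ := h
  hji

lemma TM_trans {i j m : Fin (2 * n)} (hij : (i, j) ∈ TM β) (hjm : (j, m) ∈ TM β) :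
    (i, m) ∈ TM β := by
  obtain ⟨k₁, hk₁, hji, hl₁⟩ := hij
  obtain ⟨k₂, hk₂, hmj, hl₂⟩ := hjm
  have hk : k₁ ≤ k₂ := not_lt.mp fun h => hl₁ k₂ h (congrArg qb hk₂)
  exact ⟨k₁, hk₁, hmj.trans hji, fun l hl => hl₂ l (hl.trans_le hk)⟩

lemma mem_Tfull_of_mem_TM_of_rev_mem_TM (hβ : Function.Injective fun k => qb (β k))
    {i j m : Fin (2 * n)} (hij : (i, j) ∈ TM β) (hmj : (m.rev, j.rev) ∈ TM β) :
    (i, m) ∈ Tfull β := by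
  obtain ⟨k₁, hk₁, hji, hl₁⟩ := hij
  obtain ⟨k₂, hk₂, hjm, hl₂⟩ := hmj
  have hmi : m < i := (Fin.rev_lt_rev.mp hjm).trans hji
  rcases le_or_gt k₁ k₂ with hk | hk
  · refine Or.inl ⟨k₁, hk₁, hmi, fun l hl he => ?_⟩
    have : l = k₂ := hβ (by simpa [hk₂] using he)
    exact (hl.trans_le hk).ne this
  · refine Or.inr ⟨k₂, hk₂, Fin.rev_lt_rev.mpr hmi, fun l hl he => ?_⟩
    have : l = k₁ := hβ (by simpa [hk₁] using he)
    exact (hl.trans hk).ne this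

lemma notMem_TM_of_rev_mem_TM (hβ : Function.Injective fun k => qb (β k))
    {i j m : Fin (2 * n)} (hij : (j.rev, i.rev) ∈ TM β) : (j, m) ∉ TM β := by
  rintro ⟨k₂, hk₂, -, -⟩
  obtain ⟨k₁, hk₁, -, -⟩ := hij
  have hk : k₁ = k₂ := hβ (by simp [hk₁, hk₂])
  exact Fin.rev_ne_self_two_mul j (hk₁.symm.trans (hk ▸ hk₂))

lemma Tfull_trans (hβ : Function.Injective fun k => qb (β k)) {i j m : Fin (2 * n)}
    (hij : (i, j) ∈ Tfull β) (hjm : (j, m) ∈ Tfull β) : (i, m) ∈ Tfull β := by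
  rcases hij with hij | hij <;> rcases hjm with hjm | hjm
  · exact Or.inl (TM_trans hij hjm)
  · exact mem_Tfull_of_mem_TM_of_rev_mem_TM hβ hij hjm
  · exact absurd hjm (notMem_TM_of_rev_mem_TM hβ hij)
  · exact Or.inr (TM_trans hjm hij)

lemma rev_mem_Tfull_iff {i j : Fin (2 * n)} : (j.rev, i.rev) ∈ Tfull β ↔ (i, j) ∈ Tfull β := by
  simp only [Tfull, Set.mem_union, Set.mem_ofPred_eq, Fin.rev_rev, or_comm]

end TM

theorem stmt_16 {r n : ℕ} (β : Fin r → Fin (2 * n))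
    (hβ : Function.Injective fun k => qb (β k)) :
    (∀ p ∈ Tfull β, p.2 < p.1) ∧
    (∀ i j k : Fin (2 * n), (i, j) ∈ Tfull β → (j, k) ∈ Tfull β → (i, k) ∈ Tfull β) ∧
    (∀ i j : Fin (2 * n), (i, j) ∈ Tfull β ↔ (j.rev, i.rev) ∈ Tfull β) := by
  refine ⟨?_, fun _ _ _ => Tfull_trans hβ, fun _ _ => rev_mem_Tfull_iff.symm⟩
  rintro ⟨i, j⟩ (h | h)
  · exact lt_of_mem_TM h
  · exact Fin.rev_lt_rev.mp (lt_of_mem_TM h)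
end

section
/- Let A ∈ F₂^{m×2n} satisfy A J_{2n} A^T = 0 (a stabilizer parity check matrix). Suppose for some strictly increasing α : [r] → [m] and injective β : [r] → [2n], A is (α,β)-partially reduced, meaning rows α(1),...,α(r) and columns β(1),...,β(r) of A coincide with those of Π(α,β) = Σ_i e_{α(i)} e_{β(i)}^T, and rows 1..α(r) not in Im(α) are zero. Then β is qubit-injective, and for each i ∈ [r], column 2n+1−β(i) of A is zero. -/
open Matrix

/-! Since row `α k` of `A` is the unit vector `e_{β k}`, row `α k` of `A J Aᵀ` is column
`(β k).rev` of `A`, so isotropy kills that column. Two pivots on the same qubit would then put a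
pivot `1` into such a zero column. -/

lemma mul_Jmat_apply {ι : Type*} {n : ℕ} (A : Matrix ι (Fin (2 * n)) (ZMod 2)) (a : ι)
    (j : Fin (2 * n)) : (A * Jmat n) a j = A a j.rev := by
  simp [Matrix.mul_apply, Jmat, Fin.rev_eq_iff, eq_comm (a := j)]

lemma apply_rev_eq_zero_of_mul_Jmat_mul_transpose_eq_zero {ι : Type*} [Fintype ι] {n : ℕ}
    {A : Matrix ι (Fin (2 * n)) (ZMod 2)} (hA : A * Jmat n * Aᵀ = 0) {a : ι} {b : Fin (2 * n)}
    (ha : ∀ j, A a j = if j = b then 1 else 0) (c : ι) : A c b.rev = 0 := by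
  have h := congrFun (congrFun hA a) c
  rw [Matrix.mul_apply] at h
  simpa [mul_Jmat_apply, ha, Fin.rev_eq_iff] using h

lemma eq_or_eq_rev_of_qb_eq {n : ℕ} {i j : Fin (2 * n)} (h : qb i = qb j) : i = j ∨ i = j.rev := by
  simp only [qb, Fin.ext_iff, Fin.val_rev] at h ⊢
  omega

theorem stmt_17_general {m n r : ℕ} (A : Matrix (Fin m) (Fin (2 * n)) (ZMod 2))
    (hA : A * Jmat n * Aᵀ = 0)
    (α : Fin r → Fin m)
    (β : Fin r → Fin (2 * n)) (hβ : Function.Injective β)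
    (hrowα : ∀ k : Fin r, ∀ j, A (α k) j = if j = β k then 1 else 0) :
    (Function.Injective fun k => qb (β k)) ∧
    (∀ k : Fin r, ∀ a, A a (β k).rev = 0) := by
  have hrev (k : Fin r) := apply_rev_eq_zero_of_mul_Jmat_mul_transpose_eq_zero hA (hrowα k)
  refine ⟨fun k l hkl => ?_, hrev⟩
  rcases eq_or_eq_rev_of_qb_eq hkl with h | h
  · exact hβ h
  · have hone : A (α k) (β k) = 1 := by simp [hrowα]
    rw [h, hrev l] at hone
    exact absurd hone zero_ne_one

theorem stmt_17 {m n r : ℕ} (A : Matrix (Fin m) (Fin (2 * n)) (ZMod 2))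
    (hA : A * Jmat n * Aᵀ = 0)
    (α : Fin r → Fin m) (hα : StrictMono α)
    (β : Fin r → Fin (2 * n)) (hβ : Function.Injective β)
    (hrowα : ∀ k : Fin r, ∀ j, A (α k) j = if j = β k then 1 else 0)
    (hrow0 : ∀ a : Fin m, (∃ k, a ≤ α k) → (∀ k, α k ≠ a) → ∀ j, A a j = 0)
    (hcol : ∀ k : Fin r, ∀ a, A a (β k) = if a = α k then 1 else 0) :
    (Function.Injective fun k => qb (β k)) ∧
    (∀ k : Fin r, ∀ a, A a (β k).rev = 0) :=
  stmt_17_general A hA α β hβ hrowα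
end
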